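/- Let N ≥ 2 and t ≠ 0. Then Σ over integer quadruples (x₁,x₂,x₃,x₄) with N < xᵢ ≤ 2N of min(1, N⁴/(|t|·|x₂²x₃² − x₁²x₄²|)) is at most C(ε)·(N^(2+ε) + N^(4+ε)/|t|) for every ε > 0. -/

import Mathlib

/-!
Put `a = x₂x₃` and `b = x₁x₄`, both in `(N², 4N²]`. Since `a² - b² = (a + b)(a - b)` with
`a + b ≥ N²`, each summand is at most `1` if `a = b` and `N²/(|t| k)` if `k = |a - b| ≥ 1`.
For fixed `(x₁, x₄)`, a value `a` arises from at most `d(a)` pairs `(x₂, x₃)`, and `a ↦ |a - b|`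
is at most two-to-one, so the sum over `(x₂, x₃)` is at most
`2 max d · (1 + (N²/|t|) H(4N²))`, where `H` is the harmonic number. The divisor bound
`d(n) ≤ C_δ n^δ` and `H(4N²) ≤ 1 + log(4N²)` make both factors `O(N^{ε/2})`, and summing over
the `N²` pairs `(x₁, x₄)` gives the claim.

The divisor bound comes from `d(n) = ∏ (a_p + 1)` over `p^{a_p} ∥ n`: if `p^δ ≥ 2` then
`a + 1 ≤ 2^a ≤ p^{δa}`, and for each of the boundedly many primes with `p^δ < 2`,
`a + 1 ≤ (1 + 1/(δ log 2)) p^{δa}` because `δ a log 2 ≤ log p^{δa} ≤ p^{δa}`.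
-/

open Finset

theorem Finset.sum_comp_le_mul_sum {ι κ R : Type*} [CommSemiring R] [PartialOrder R]
    [IsOrderedRing R] [DecidableEq κ] {s : Finset ι} {t : Finset κ} {g : ι → κ} {f : κ → R}
    {D : R} (hg : ∀ i ∈ s, g i ∈ t) (hf : ∀ j ∈ t, 0 ≤ f j)
    (hfiber : ∀ j ∈ t, (#{i ∈ s | g i = j} : R) ≤ D) :
    ∑ i ∈ s, f (g i) ≤ D * ∑ j ∈ t, f j := by
  rw [← sum_fiberwise_of_maps_to hg, mul_sum]
  refine sum_le_sum fun j hj => ?_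
  rw [sum_congr rfl fun i hi => congrArg f (mem_filter.1 hi).2, sum_const, nsmul_eq_mul]
  exact mul_le_mul_of_nonneg_right (hfiber j hj) (hf j hj)

theorem Nat.card_filter_mul_eq_le_card_divisors (s : Finset (ℕ × ℕ)) {n : ℕ} (hn : n ≠ 0) :
    #{p ∈ s | p.1 * p.2 = n} ≤ #n.divisors := by
  calc #{p ∈ s | p.1 * p.2 = n} ≤ #n.divisorsAntidiagonal :=
        card_le_card fun p hp => Nat.mem_divisorsAntidiagonal.2 ⟨(mem_filter.1 hp).2, hn⟩
    _ = #n.divisors := by rw [← Nat.map_div_right_divisors, card_map]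

theorem card_filter_natAbs_sub_eq_le_two (s : Finset ℕ) (b k : ℕ) :
    #{a ∈ s | (((a : ℕ) : ℤ) - b).natAbs = k} ≤ 2 := by
  refine (card_le_card fun a ha => ?_).trans (card_le_two (a := b + k) (b := b - k))
  have := (mem_filter.1 ha).2
  simp only [mem_insert, mem_singleton]
  omega

theorem natCast_add_one_le_mul_rpow {δ p : ℝ} (hδ : 0 < δ) (hp : 2 ≤ p) (a : ℕ) :
    (a : ℝ) + 1 ≤ (1 + (δ * Real.log 2)⁻¹) * p ^ (δ * a) := by
  have hp0 : 0 < p := by linarith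
  have hlog2 : 0 < δ * Real.log 2 := mul_pos hδ (Real.log_pos one_lt_two)
  have hpow : 1 ≤ p ^ (δ * a) := Real.one_le_rpow (by linarith) (by positivity)
  have hlog : δ * Real.log 2 * a ≤ p ^ (δ * a) := by
    calc δ * Real.log 2 * a ≤ Real.log (p ^ (δ * a)) := by
          rw [Real.log_rpow hp0]
          have := mul_le_mul_of_nonneg_left (Real.log_le_log (by norm_num) hp)
            (by positivity : (0 : ℝ) ≤ δ * a)
          linarith
      _ ≤ p ^ (δ * a) := (Real.log_le_sub_one_of_pos (by positivity)).trans (by linarith)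
  have : (a : ℝ) ≤ (δ * Real.log 2)⁻¹ * p ^ (δ * a) := by
    rw [inv_mul_eq_div, le_div_iff₀ hlog2]; linarith
  nlinarith

theorem natCast_add_one_le_rpow {δ p : ℝ} (hp0 : 0 ≤ p) (hp : 2 ≤ p ^ δ) (a : ℕ) :
    (a : ℝ) + 1 ≤ p ^ (δ * a) := by
  rw [Real.rpow_mul_natCast hp0]
  calc (a : ℝ) + 1 ≤ 2 ^ a := by exact_mod_cast Nat.lt_two_pow_self
    _ ≤ (p ^ δ) ^ a := pow_le_pow_left₀ (by norm_num) hp a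

theorem Nat.rpow_eq_prod_primeFactors {n : ℕ} (hn : n ≠ 0) (δ : ℝ) :
    (n : ℝ) ^ δ = ∏ p ∈ n.primeFactors, (p : ℝ) ^ (δ * n.factorization p) := by
  conv_lhs => rw [← Nat.prod_factorization_pow_eq_self hn]
  rw [Finsupp.prod, Nat.support_factorization, Nat.cast_prod,
    ← Real.finsetProd_rpow _ _ fun p _ => by positivity]
  refine prod_congr rfl fun p _ => ?_
  rw [Nat.cast_pow, ← Real.rpow_natCast_mul (by positivity), mul_comm]

theorem Nat.exists_card_divisors_le_mul_rpow {δ : ℝ} (hδ : 0 < δ) :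
    ∃ C : ℝ, 0 < C ∧ ∀ n : ℕ, n ≠ 0 → (#n.divisors : ℝ) ≤ C * n ^ δ := by
  set K : ℝ := 1 + (δ * Real.log 2)⁻¹
  set M : ℕ := ⌈(2 : ℝ) ^ δ⁻¹⌉₊
  have hK : 1 ≤ K := le_add_of_nonneg_right (inv_nonneg.2 (by positivity))
  have hlarge : ∀ p : ℕ, M ≤ p → 2 ≤ (p : ℝ) ^ δ := fun p hp => by
    calc (2 : ℝ) = ((2 : ℝ) ^ δ⁻¹) ^ δ := (Real.rpow_inv_rpow (by norm_num) hδ.ne').symm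
      _ ≤ (p : ℝ) ^ δ := Real.rpow_le_rpow (by positivity)
          ((Nat.le_ceil _).trans (by exact_mod_cast hp)) hδ.le
  refine ⟨K ^ M, by positivity, fun n hn => ?_⟩
  have hfactor : ∀ p ∈ n.primeFactors, (n.factorization p : ℝ) + 1 ≤
      (if p < M then K else 1) * (p : ℝ) ^ (δ * n.factorization p) := fun p hp => by
    split_ifs with hpM
    · have hp2 : (2 : ℝ) ≤ p := by exact_mod_cast (Nat.prime_of_mem_primeFactors hp).two_le
      exact natCast_add_one_le_mul_rpow hδ hp2 _
    · rw [one_mul]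
      exact natCast_add_one_le_rpow (by positivity) (hlarge p (not_lt.1 hpM)) _
  have hsmall : ∏ p ∈ n.primeFactors, (if p < M then K else 1) ≤ K ^ M := by
    rw [prod_ite, prod_const, prod_const_one, mul_one]
    refine pow_le_pow_right₀ hK ((card_le_card fun p hp => ?_).trans (card_range M).le)
    exact mem_range.2 (mem_filter.1 hp).2
  calc (#n.divisors : ℝ) = ∏ p ∈ n.primeFactors, ((n.factorization p : ℝ) + 1) := by
        rw [Nat.card_divisors hn]; push_cast; rfl
    _ ≤ ∏ p ∈ n.primeFactors, (if p < M then K else 1) * (p : ℝ) ^ (δ * n.factorization p) :=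
        prod_le_prod (fun _ _ => by positivity) hfactor
    _ = (∏ p ∈ n.primeFactors, (if p < M then K else 1)) * n ^ δ := by
        rw [prod_mul_distrib, Nat.rpow_eq_prod_primeFactors hn]
    _ ≤ K ^ M * n ^ δ := by gcongr

theorem harmonic_le_one_add_rpow_div {δ : ℝ} (hδ : 0 < δ) (L : ℕ) :
    (harmonic L : ℝ) ≤ 1 + (L : ℝ) ^ δ / δ :=
  (harmonic_le_one_add_log L).trans (by gcongr; exact Real.log_le_rpow_div (by positivity) hδ)

theorem Real.rpow_natCast_add_eq_pow_mul_sq {x : ℝ} (hx : 0 < x) (k : ℕ) (ε : ℝ) :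
    x ^ (k + ε) = x ^ k * (x ^ (ε / 2)) ^ 2 := by
  rw [Real.rpow_add hx, Real.rpow_natCast, ← Real.rpow_mul_natCast hx.le]
  ring_nf

noncomputable def diffWeight (c : ℝ) (k : ℕ) : ℝ := if k = 0 then 1 else c / k

theorem diffWeight_nonneg {c : ℝ} (hc : 0 ≤ c) (k : ℕ) : 0 ≤ diffWeight c k := by
  unfold diffWeight; split_ifs <;> positivity

theorem sum_range_diffWeight (c : ℝ) (M : ℕ) :
    ∑ k ∈ range (M + 1), diffWeight c k = 1 + c * harmonic M := by
  simp [sum_range_succ', diffWeight, harmonic, mul_sum, div_eq_mul_inv, add_comm]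

theorem ite_min_one_div_le_diffWeight {N a b : ℕ} (t : ℝ) (hab : N ^ 2 ≤ a + b) :
    (if a ^ 2 = b ^ 2 then (1 : ℝ) else min 1 ((N : ℝ) ^ 4 / (|t| * |(a : ℝ) ^ 2 - (b : ℝ) ^ 2|)))
      ≤ diffWeight ((N : ℝ) ^ 2 / |t|) ((a : ℤ) - b).natAbs := by
  rcases eq_or_ne a b with rfl | hne
  · simp [diffWeight]
  have hk : ((a : ℤ) - b).natAbs ≠ 0 := by omega
  rw [if_neg (fun h => hne (Nat.pow_left_injective two_ne_zero h)), diffWeight, if_neg hk]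
  have hsq : |(a : ℝ) ^ 2 - (b : ℝ) ^ 2| = (a + b : ℝ) * ((a : ℤ) - b).natAbs := by
    rw [Nat.cast_natAbs, Int.cast_abs, ← abs_of_nonneg (by positivity : (0 : ℝ) ≤ a + b),
      ← abs_mul]
    push_cast; ring_nf
  have hN : (N : ℝ) ^ 2 / (a + b) ≤ 1 :=
    div_le_one_of_le₀ (by exact_mod_cast hab) (by positivity)
  calc min 1 ((N : ℝ) ^ 4 / (|t| * |(a : ℝ) ^ 2 - (b : ℝ) ^ 2|))
      ≤ (N : ℝ) ^ 4 / (|t| * |(a : ℝ) ^ 2 - (b : ℝ) ^ 2|) := min_le_right _ _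
    _ = (N : ℝ) ^ 2 / |t| / ((a : ℤ) - b).natAbs * ((N : ℝ) ^ 2 / (a + b)) := by
        rw [hsq, div_div, div_mul_div_comm]; congr 1 <;> ring
    _ ≤ (N : ℝ) ^ 2 / |t| / ((a : ℤ) - b).natAbs := mul_le_of_le_one_right (by positivity) hN

theorem sum_diffWeight_natAbs_mul_sub_le {S : Finset (ℕ × ℕ)} {L b : ℕ} {c D : ℝ} (hc : 0 ≤ c)
    (hS : ∀ p ∈ S, p.1 * p.2 ∈ Icc 1 L) (hb : b ≤ L) (hD0 : 0 ≤ D)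
    (hD : ∀ n ∈ Icc 1 L, (#n.divisors : ℝ) ≤ D) :
    ∑ p ∈ S, diffWeight c (((p.1 * p.2 : ℕ) : ℤ) - b).natAbs ≤ 2 * D * (1 + c * harmonic L) := by
  have hproducts : ∑ p ∈ S, diffWeight c (((p.1 * p.2 : ℕ) : ℤ) - b).natAbs
      ≤ D * ∑ a ∈ Icc 1 L, diffWeight c (((a : ℕ) : ℤ) - b).natAbs :=
    sum_comp_le_mul_sum (f := fun a : ℕ => diffWeight c ((a : ℤ) - b).natAbs) hS
      (fun _ _ => diffWeight_nonneg hc _) fun n hn =>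
      (Nat.cast_le.2 (Nat.card_filter_mul_eq_le_card_divisors S
        (by simp only [mem_Icc] at hn; omega))).trans (hD n hn)
  have hdiffs : ∑ a ∈ Icc 1 L, diffWeight c (((a : ℕ) : ℤ) - b).natAbs
      ≤ 2 * ∑ k ∈ range (L + 1), diffWeight c k :=
    sum_comp_le_mul_sum (fun a ha => by simp only [mem_Icc, mem_range] at ha ⊢; omega)
      (fun _ _ => diffWeight_nonneg hc _)
      fun k _ => by exact_mod_cast card_filter_natAbs_sub_eq_le_two _ b k
  calc _ ≤ D * (2 * ∑ k ∈ range (L + 1), diffWeight c k) :=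
        hproducts.trans (mul_le_mul_of_nonneg_left hdiffs hD0)
    _ = 2 * D * (1 + c * harmonic L) := by rw [sum_range_diffWeight]; ring

theorem mul_mem_Ioc_sq {N x y : ℕ} (hx : x ∈ Ioc N (2 * N)) (hy : y ∈ Ioc N (2 * N)) :
    x * y ∈ Ioc (N ^ 2) (4 * N ^ 2) := by
  simp only [mem_Ioc] at hx hy ⊢
  constructor <;> nlinarith

theorem sum_quadruples_le (N : ℕ) (t : ℝ) {D : ℝ} (hD0 : 0 ≤ D)
    (hD : ∀ n ∈ Icc 1 (4 * N ^ 2), (#n.divisors : ℝ) ≤ D) :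
    ∑ x₁ ∈ Ioc N (2 * N), ∑ x₂ ∈ Ioc N (2 * N), ∑ x₃ ∈ Ioc N (2 * N), ∑ x₄ ∈ Ioc N (2 * N),
      (if x₂ ^ 2 * x₃ ^ 2 = x₁ ^ 2 * x₄ ^ 2 then (1 : ℝ)
        else min 1 ((N : ℝ) ^ 4 /
          (|t| * |(x₂ : ℝ) ^ 2 * (x₃ : ℝ) ^ 2 - (x₁ : ℝ) ^ 2 * (x₄ : ℝ) ^ 2|)))
      ≤ N ^ 2 * (2 * D * (1 + (N : ℝ) ^ 2 / |t| * harmonic (4 * N ^ 2))) := by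
  set s := Ioc N (2 * N)
  set c := (N : ℝ) ^ 2 / |t|
  calc _ ≤ ∑ x₁ ∈ s, ∑ x₂ ∈ s, ∑ x₃ ∈ s, ∑ x₄ ∈ s,
          diffWeight c (((x₂ * x₃ : ℕ) : ℤ) - (x₁ * x₄ : ℕ)).natAbs := by
        gcongr with x₁ h₁ x₂ h₂ x₃ h₃ x₄ h₄
        have h₂₃ := mem_Ioc.1 (mul_mem_Ioc_sq h₂ h₃)
        simpa only [← mul_pow, ← Nat.cast_mul] using
          ite_min_one_div_le_diffWeight (a := x₂ * x₃) (b := x₁ * x₄) t (by omega)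
    _ = ∑ x₁ ∈ s, ∑ x₄ ∈ s, ∑ p ∈ s ×ˢ s,
          diffWeight c (((p.1 * p.2 : ℕ) : ℤ) - (x₁ * x₄ : ℕ)).natAbs := by
        refine sum_congr rfl fun x₁ _ => ?_
        simp only [sum_product]
        exact (sum_congr rfl fun _ _ => sum_comm).trans sum_comm
    _ ≤ ∑ x₁ ∈ s, ∑ x₄ ∈ s, 2 * D * (1 + c * harmonic (4 * N ^ 2)) := by
        gcongr with x₁ h₁ x₄ h₄
        have h₁₄ := mem_Ioc.1 (mul_mem_Ioc_sq h₁ h₄)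
        refine sum_diffWeight_natAbs_mul_sub_le (by positivity) (fun p hp => ?_) h₁₄.2 hD0 hD
        have := mem_Ioc.1 (mul_mem_Ioc_sq (mem_product.1 hp).1 (mem_product.1 hp).2)
        simp only [mem_Icc]; omega
    _ = _ := by
        simp only [s, sum_const, Nat.card_Ioc, show 2 * N - N = N by omega, nsmul_eq_mul]
        ring

theorem four_mul_sq_le_pow_four {N : ℕ} (hN : 2 ≤ N) : 4 * N ^ 2 ≤ N ^ 4 := by
  have : 4 ≤ N ^ 2 := by nlinarith
  nlinarith

theorem natCast_rpow_le_of_le_pow_four {N n : ℕ} (hn : n ≤ N ^ 4) {ε : ℝ} (hε : 0 ≤ ε) :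
    (n : ℝ) ^ (ε / 8) ≤ (N : ℝ) ^ (ε / 2) := by
  calc (n : ℝ) ^ (ε / 8) ≤ ((N ^ 4 : ℕ) : ℝ) ^ (ε / 8) := by gcongr
    _ = (N : ℝ) ^ (ε / 2) := by
        rw [Nat.cast_pow, ← Real.rpow_natCast_mul (by positivity)]; ring_nf

theorem harmonic_four_mul_sq_le {N : ℕ} (hN : 2 ≤ N) {ε : ℝ} (hε : 0 < ε) :
    (harmonic (4 * N ^ 2) : ℝ) ≤ (1 + (ε / 8)⁻¹) * (N : ℝ) ^ (ε / 2) := by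
  have hΛ : 1 ≤ (N : ℝ) ^ (ε / 2) := Real.one_le_rpow (by norm_cast; omega) (by positivity)
  have := mul_le_mul_of_nonneg_right
    (natCast_rpow_le_of_le_pow_four (four_mul_sq_le_pow_four hN) hε.le)
    (inv_nonneg.2 (by positivity : (0 : ℝ) ≤ ε / 8))
  calc (harmonic (4 * N ^ 2) : ℝ) ≤ 1 + ((4 * N ^ 2 : ℕ) : ℝ) ^ (ε / 8) * (ε / 8)⁻¹ := by
        rw [← div_eq_mul_inv]; exact harmonic_le_one_add_rpow_div (by positivity) _
    _ ≤ (1 + (ε / 8)⁻¹) * (N : ℝ) ^ (ε / 2) := by nlinarith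

theorem stmt_9 :
    ∀ ε : ℝ, 0 < ε → ∃ C : ℝ, 0 < C ∧
      ∀ N : ℕ, 2 ≤ N → ∀ t : ℝ, t ≠ 0 →
        (∑ x₁ ∈ Finset.Ioc N (2 * N), ∑ x₂ ∈ Finset.Ioc N (2 * N),
         ∑ x₃ ∈ Finset.Ioc N (2 * N), ∑ x₄ ∈ Finset.Ioc N (2 * N),
          (if x₂^2 * x₃^2 = x₁^2 * x₄^2 then (1 : ℝ)
           else min 1 ((N : ℝ)^4 / (|t| * |(x₂ : ℝ)^2 * (x₃ : ℝ)^2 - (x₁ : ℝ)^2 * (x₄ : ℝ)^2|)))) ≤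
          C * ((N : ℝ) ^ (2 + ε : ℝ) + (N : ℝ) ^ (4 + ε : ℝ) / |t|) := by
  intro ε hε
  obtain ⟨C₀, hC₀, hdiv⟩ := Nat.exists_card_divisors_le_mul_rpow (δ := ε / 8) (by positivity)
  set K := 1 + (ε / 8)⁻¹
  have hK : 1 ≤ K := le_add_of_nonneg_right (by positivity)
  refine ⟨2 * C₀ * K, by positivity, fun N hN t _ => ?_⟩
  have hN₀ : (0 : ℝ) < N := by norm_cast; omega
  set Λ := (N : ℝ) ^ (ε / 2)
  have hΛ : 1 ≤ Λ := Real.one_le_rpow (by norm_cast; omega) (by positivity)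
  have hD : ∀ n ∈ Icc 1 (4 * N ^ 2), (#n.divisors : ℝ) ≤ C₀ * Λ := fun n hn => by
    have hn' := mem_Icc.1 hn
    refine (hdiv n (by omega)).trans ?_
    gcongr
    exact natCast_rpow_le_of_le_pow_four (hn'.2.trans (four_mul_sq_le_pow_four hN)) hε.le
  rw [show (2 + ε : ℝ) = (2 : ℕ) + ε by norm_num, show (4 + ε : ℝ) = (4 : ℕ) + ε by norm_num,
    Real.rpow_natCast_add_eq_pow_mul_sq hN₀, Real.rpow_natCast_add_eq_pow_mul_sq hN₀]
  calc _ ≤ (N : ℝ) ^ 2 * (2 * (C₀ * Λ) * (1 + (N : ℝ) ^ 2 / |t| * (K * Λ))) := by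
        refine (sum_quadruples_le N t (by positivity) hD).trans ?_
        gcongr
        exact harmonic_four_mul_sq_le hN hε
    _ = 2 * C₀ * N ^ 2 * Λ + 2 * C₀ * K * (N ^ 4 * Λ ^ 2 / |t|) := by ring
    _ ≤ 2 * C₀ * N ^ 2 * (K * Λ ^ 2) + 2 * C₀ * K * (N ^ 4 * Λ ^ 2 / |t|) := by
        gcongr; nlinarith
    _ = _ := by ring
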